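/- In the GE model with intersection bonus and 1-lookahead, for every n and T there exists a deterministic 1-lookahead algorithm that is 4-competitive: on every general-evolution intersection-bonus instance with T time steps, the value of its output sequence is at least OPT/4. -/

import Mathlib

/-- The value of a solution sequence under the intersection bonus: total profit
plus, for each pair of consecutive steps, the size of the intersection of the two
solutions. -/
noncomputable def intVal (n T : ℕ) (p : ℕ → Finset (Fin n) → ℝ)
    (S : ℕ → Finset (Fin n)) : ℝ :=
  (∑ t ∈ Finset.range T, p t (S t)) +
    ∑ t ∈ Finset.range (T - 1), ((S t ∩ S (t + 1)).card : ℝ)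

/-- A valid multistage instance: the empty set is feasible at every time step and
profits are nonnegative. -/
def ValidInstance (n T : ℕ) (F : ℕ → Set (Finset (Fin n)))
    (p : ℕ → Finset (Fin n) → ℝ) : Prop :=
  (∀ t, t < T → (∅ : Finset (Fin n)) ∈ F t) ∧ ∀ t, t < T → ∀ S, 0 ≤ p t S

/-- A solution sequence: feasible at every time step. -/
def IsSol (n T : ℕ) (F : ℕ → Set (Finset (Fin n))) (S : ℕ → Finset (Fin n)) : Prop :=
  ∀ t, t < T → S t ∈ F t

/-- A deterministic online algorithm: the solution output at time `t < T` depends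
only on the data `(F_s, p_s)` revealed up to time `s ≤ t`. -/
def IsOnline (n T : ℕ)
    (alg : (ℕ → Set (Finset (Fin n))) → (ℕ → Finset (Fin n) → ℝ) → ℕ → Finset (Fin n)) :
    Prop :=
  ∀ F p F' p', ∀ t, t < T →
    (∀ s, s ≤ t → F s = F' s ∧ p s = p' s) → alg F p t = alg F' p' t

/-- A deterministic 1-lookahead algorithm: the solution output at time `t < T`
depends only on the data `(F_s, p_s)` for `s ≤ min (t+1) (T-1)`, i.e. it
additionally knows the next time step's data. -/
def IsLookahead1 (n T : ℕ)
    (alg : (ℕ → Set (Finset (Fin n))) → (ℕ → Finset (Fin n) → ℝ) → ℕ → Finset (Fin n)) :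
    Prop :=
  ∀ F p F' p', ∀ t, t < T →
    (∀ s, s ≤ t + 1 → s < T → F s = F' s ∧ p s = p' s) → alg F p t = alg F' p' t

/-!
Let `w t` be the best value of a feasible pair `(S_t, S_{t+1})` counted with both profits and
the bonus `|S_t ∩ S_{t+1}|`; with one step of lookahead `w t` is known at time `t`. Any solution
sequence is worth at most `∑ w t`, since each profit appears in some pair term. The algorithm
plays best pairs: at time `t` it either completes the pair started at `t - 1` or abandons it for
the pair at `t`, which it does exactly when `w t ≥ 2 w (t - 1)`. Inside a chain of abandoned
pairs the weights at least double, so the chain costs at most twice its last, completed, pair,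
and the one pair skipped after a completion weighs less than twice that too. Hence the
completed pairs, which occupy disjoint time steps, carry at least a quarter of `∑ w t`.
-/

open Finset
open scoped Classical

section Doubling

variable (m : ℕ) (w : ℕ → ℝ)

/-- The doubling rule on the edges `0, …, m - 1` of a path with weights `w`: a pair is started
at edge `t` unless the one started at `t - 1` is still open and `w t < 2 * w (t - 1)`. -/
def Starts : ℕ → Prop
  | 0 => 0 < m
  | t + 1 => t + 1 < m ∧ (¬Starts t ∨ 2 * w t ≤ w (t + 1))

def Completes (t : ℕ) : Prop :=
  Starts m w t ∧ ¬Starts m w (t + 1)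

/-- While a chain of started pairs grows, `2 * w t` bounds the weight it has not yet paid for;
after a completion, `-2 * w t` reserves the payment for the next edge, which is skipped. -/
noncomputable def doublingPotential : ℕ → ℝ
  | 0 => 0
  | t + 1 => if Starts m w t then (if Starts m w (t + 1) then 2 * w t else -(2 * w t)) else 0

variable {m w}

theorem Starts.lt {t : ℕ} (h : Starts m w t) : t < m := by
  cases t with
  | zero => exact h
  | succ t => exact h.1

theorem Completes.not_succ {t : ℕ} (h : Completes m w t) : ¬Completes m w (t + 1) :=
  fun h' => h.2 h'.1

theorem starts_congr {w' : ℕ → ℝ} {t : ℕ} (h : ∀ s ≤ t, s < m → w s = w' s) :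
    Starts m w t ↔ Starts m w' t := by
  induction t with
  | zero => rfl
  | succ t ih =>
    simp only [Starts]
    refine and_congr_right fun ht => ?_
    rw [ih fun s hs => h s (by omega), h t (by omega) (by omega), h (t + 1) le_rfl ht]

theorem doublingPotential_add_le_zero_of_not_starts {t : ℕ} (ht : t < m)
    (h : ¬Starts m w t) : doublingPotential m w t + w t ≤ 0 := by
  cases t with
  | zero => exact absurd ht h
  | succ t =>
    have hs : Starts m w t ∧ w (t + 1) < 2 * w t := by
      simp only [Starts, not_and, not_or, not_not, not_le] at h
      exact h ht
    simp only [doublingPotential, if_pos hs.1, if_neg h]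
    linarith [hs.2]

section Nonneg

variable (hw : ∀ s < m, 0 ≤ w s)
include hw

theorem doublingPotential_le_of_starts {t : ℕ} (h : Starts m w t) :
    doublingPotential m w t ≤ w t := by
  cases t with
  | zero => simpa [doublingPotential] using hw 0 h.lt
  | succ t =>
    obtain ⟨ht, hdouble⟩ := h
    by_cases hs : Starts m w t
    · have : 2 * w t ≤ w (t + 1) := hdouble.resolve_left (not_not.2 hs)
      have hs' : Starts m w (t + 1) := ⟨ht, hdouble⟩
      simpa only [doublingPotential, if_pos hs, if_pos hs'] using this
    · simpa [doublingPotential, hs] using hw (t + 1) ht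

theorem doublingPotential_le_zero : doublingPotential m w m ≤ 0 := by
  cases m with
  | zero => exact le_rfl
  | succ k =>
    have : ¬Starts (k + 1) w (k + 1) := fun h => lt_irrefl _ h.lt
    simp only [doublingPotential, if_neg this]
    split_ifs <;> linarith [hw k (Nat.lt_succ_self k)]

theorem sum_le_four_mul_sum_completes_add_doublingPotential {t : ℕ} (ht : t ≤ m) :
    ∑ s ∈ range t, w s ≤
      4 * ∑ s ∈ range t, (if Completes m w s then w s else 0) + doublingPotential m w t := by
  induction t with
  | zero => simp [doublingPotential]
  | succ t ih =>
    have ih := ih (by omega)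
    rw [sum_range_succ, sum_range_succ]
    by_cases hs : Starts m w t
    · have := doublingPotential_le_of_starts hw hs
      by_cases hs' : Starts m w (t + 1)
      · have hgain : (if Completes m w t then w t else 0) = 0 := if_neg fun h => h.2 hs'
        have hφ : doublingPotential m w (t + 1) = 2 * w t := by
          simp only [doublingPotential, if_pos hs, if_pos hs']
        rw [hgain, hφ]
        linarith
      · have hgain : (if Completes m w t then w t else 0) = w t := if_pos ⟨hs, hs'⟩
        have hφ : doublingPotential m w (t + 1) = -(2 * w t) := by
          simp only [doublingPotential, if_pos hs, if_neg hs']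
        rw [hgain, hφ]
        linarith
    · have := doublingPotential_add_le_zero_of_not_starts (by omega) hs
      have hgain : (if Completes m w t then w t else 0) = 0 := if_neg fun h => hs h.1
      have hφ : doublingPotential m w (t + 1) = 0 := by simp only [doublingPotential, if_neg hs]
      rw [hgain, hφ]
      linarith

theorem sum_le_four_mul_sum_completes :
    ∑ s ∈ range m, w s ≤ 4 * ∑ s ∈ range m, (if Completes m w s then w s else 0) := by
  linarith [sum_le_four_mul_sum_completes_add_doublingPotential hw le_rfl,
    doublingPotential_le_zero hw]

end Nonneg

end Doubling

section PathSums

variable {m : ℕ} {x : ℕ → ℝ}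

theorem sum_range_succ_le_sum_add_succ (hm : 0 < m) (hx : ∀ t ≤ m, 0 ≤ x t) :
    ∑ t ∈ range (m + 1), x t ≤ ∑ s ∈ range m, (x s + x (s + 1)) := by
  have h0 : x 0 ≤ ∑ s ∈ range m, x s :=
    single_le_sum (fun s hs => hx s (by simp at hs; omega)) (mem_range.2 hm)
  rw [sum_range_succ', sum_add_distrib]
  linarith

theorem sum_ite_add_succ_le {c : ℕ → Prop} (hc : ∀ t, c t → ¬c (t + 1))
    (hx : ∀ t ≤ m, 0 ≤ x t) :
    ∑ s ∈ range m, (if c s then x s + x (s + 1) else 0) ≤ ∑ t ∈ range (m + 1), x t := by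
  -- the extra term is the share of `x k` already claimed by a pair starting at `k`
  suffices ∀ k ≤ m, ∑ s ∈ range k, (if c s then x s + x (s + 1) else 0) +
      (if c k then x k else 0) ≤ ∑ t ∈ range (k + 1), x t by
    have := this m le_rfl
    split_ifs at this <;> linarith [hx m le_rfl]
  intro k hk
  induction k with
  | zero => split_ifs <;> simp [hx 0 hk]
  | succ k ih =>
    have ih := ih (by omega)
    rw [sum_range_succ, sum_range_succ (n := k + 1)]
    have := hx (k + 1) hk
    by_cases hk' : c k
    · simp only [if_pos hk', if_neg (hc k hk')] at ih ⊢
      linarith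
    · simp only [if_neg hk'] at ih ⊢
      split_ifs <;> linarith

end PathSums

section ArgmaxOn

variable {α β : Type*} [Finite α] [Inhabited α] [LinearOrder β] {s : Set α} {f : α → β}

noncomputable def argmaxOn (s : Set α) (f : α → β) : α :=
  if h : s.Nonempty then (Set.exists_max_image s f s.toFinite h).choose else default

theorem argmaxOn_mem (h : s.Nonempty) : argmaxOn s f ∈ s := by
  rw [argmaxOn, dif_pos h]
  exact (Set.exists_max_image s f s.toFinite h).choose_spec.1

theorem le_argmaxOn {a : α} (ha : a ∈ s) : f a ≤ f (argmaxOn s f) := by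
  rw [argmaxOn, dif_pos ⟨a, ha⟩]
  exact (Set.exists_max_image s f s.toFinite ⟨a, ha⟩).choose_spec.2 a ha

end ArgmaxOn

section Algorithm

variable {n T : ℕ} {F : ℕ → Set (Finset (Fin n))} {p : ℕ → Finset (Fin n) → ℝ}

noncomputable def pairValue (p₀ p₁ : Finset (Fin n) → ℝ)
    (AB : Finset (Fin n) × Finset (Fin n)) : ℝ :=
  p₀ AB.1 + p₁ AB.2 + #(AB.1 ∩ AB.2)

noncomputable def bestPair (F : ℕ → Set (Finset (Fin n))) (p : ℕ → Finset (Fin n) → ℝ)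
    (t : ℕ) : Finset (Fin n) × Finset (Fin n) :=
  argmaxOn (F t ×ˢ F (t + 1)) (pairValue (p t) (p (t + 1)))

noncomputable def pairWeight (F : ℕ → Set (Finset (Fin n))) (p : ℕ → Finset (Fin n) → ℝ)
    (t : ℕ) : ℝ :=
  pairValue (p t) (p (t + 1)) (bestPair F p t)

noncomputable def doublingAlg (T : ℕ) (F : ℕ → Set (Finset (Fin n)))
    (p : ℕ → Finset (Fin n) → ℝ) (t : ℕ) : Finset (Fin n) :=
  if Starts (T - 1) (pairWeight F p) t then (bestPair F p t).1
  else if 0 < t ∧ Starts (T - 1) (pairWeight F p) (t - 1) then (bestPair F p (t - 1)).2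
  else argmaxOn (F t) (p t)

theorem bestPair_congr {F' : ℕ → Set (Finset (Fin n))} {p' : ℕ → Finset (Fin n) → ℝ}
    {t : ℕ} (h : ∀ s, t ≤ s → s ≤ t + 1 → F s = F' s ∧ p s = p' s) :
    bestPair F p t = bestPair F' p' t := by
  simp only [bestPair, (h t le_rfl (by omega)).1, (h t le_rfl (by omega)).2,
    (h (t + 1) (by omega) le_rfl).1, (h (t + 1) (by omega) le_rfl).2]

theorem doublingAlg_isLookahead1 : IsLookahead1 n T (doublingAlg T) := by
  intro F p F' p' t ht hagree
  have hpair : ∀ s ≤ t, s < T - 1 → bestPair F p s = bestPair F' p' s ∧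
      pairWeight F p s = pairWeight F' p' s := by
    intro s hs hsT
    have hb := bestPair_congr (F := F) (F' := F') (p := p) (p' := p') (t := s)
      fun r hr hr' => hagree r (by omega) (by omega)
    refine ⟨hb, ?_⟩
    rw [pairWeight, pairWeight, hb, (hagree s (by omega) (by omega)).2,
      (hagree (s + 1) (by omega) (by omega)).2]
  have hstarts : ∀ s ≤ t,
      Starts (T - 1) (pairWeight F p) s ↔ Starts (T - 1) (pairWeight F' p') s :=
    fun s hs => starts_congr fun r hr hrT => (hpair r (by omega) hrT).2
  simp only [doublingAlg, hstarts t le_rfl, hstarts (t - 1) (Nat.sub_le t 1)]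
  split_ifs with h₁ h₂
  · rw [(hpair t le_rfl h₁.lt).1]
  · rw [(hpair (t - 1) (by omega) h₂.2.lt).1]
  · rw [(hagree t (by omega) ht).1, (hagree t (by omega) ht).2]

section Valid

variable (hF : ∀ t < T, (∅ : Finset (Fin n)) ∈ F t)
include hF

theorem bestPair_mem {t : ℕ} (ht : t + 1 < T) : bestPair F p t ∈ F t ×ˢ F (t + 1) :=
  argmaxOn_mem ⟨(∅, ∅), hF t (by omega), hF (t + 1) ht⟩

theorem doublingAlg_mem {t : ℕ} (ht : t < T) : doublingAlg T F p t ∈ F t := by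
  unfold doublingAlg
  split_ifs with h₁ h₂
  · exact (bestPair_mem hF (by have := h₁.lt; omega)).1
  · have := (bestPair_mem (p := p) hF (t := t - 1) (by have := h₂.2.lt; omega)).2
    rwa [Nat.sub_add_cancel h₂.1] at this
  · exact argmaxOn_mem ⟨∅, hF t ht⟩

end Valid

theorem pairValue_le_pairWeight {t : ℕ} {A B : Finset (Fin n)} (hA : A ∈ F t)
    (hB : B ∈ F (t + 1)) : pairValue (p t) (p (t + 1)) (A, B) ≤ pairWeight F p t :=
  le_argmaxOn (s := F t ×ˢ F (t + 1)) ⟨hA, hB⟩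

theorem pairWeight_eq_of_completes {t : ℕ} (h : Completes (T - 1) (pairWeight F p) t) :
    pairWeight F p t = pairValue (p t) (p (t + 1))
      (doublingAlg T F p t, doublingAlg T F p (t + 1)) := by
  have hfst : doublingAlg T F p t = (bestPair F p t).1 := if_pos h.1
  have hsnd : doublingAlg T F p (t + 1) = (bestPair F p t).2 := by
    rw [doublingAlg, if_neg h.2, if_pos ⟨t.succ_pos, h.1⟩]
    rfl
  rw [hfst, hsnd, pairWeight]

section Competitive

variable (hv : ValidInstance n T F p)
include hv

theorem pairWeight_nonneg {t : ℕ} (ht : t + 1 < T) : 0 ≤ pairWeight F p t := by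
  have := pairValue_le_pairWeight (p := p) (hv.1 t (by omega)) (hv.1 (t + 1) ht)
  simp only [pairValue, inter_self, card_empty, Nat.cast_zero, add_zero] at this
  linarith [hv.2 t (by omega) ∅, hv.2 (t + 1) ht ∅]

theorem intVal_le_sum_pairWeight {S : ℕ → Finset (Fin n)} (hS : IsSol n T F S) (hT : 2 ≤ T) :
    intVal n T p S ≤ ∑ t ∈ range (T - 1), pairWeight F p t := by
  have hprofit := sum_range_succ_le_sum_add_succ (m := T - 1) (x := fun t => p t (S t))
    (by omega) fun t ht => hv.2 t (by omega) _
  have hpairs : ∀ t ∈ range (T - 1),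
      p t (S t) + p (t + 1) (S (t + 1)) + #(S t ∩ S (t + 1)) ≤ pairWeight F p t := fun t ht =>
    pairValue_le_pairWeight (hS t (by simp at ht; omega))
      (hS (t + 1) (by simp at ht; omega))
  rw [Nat.sub_add_cancel (by omega)] at hprofit
  have := sum_le_sum hpairs
  rw [sum_add_distrib] at this
  rw [intVal]
  linarith

theorem sum_completes_le_intVal_doublingAlg (hT : 0 < T) :
    ∑ t ∈ range (T - 1),
        (if Completes (T - 1) (pairWeight F p) t then pairWeight F p t else 0) ≤
      intVal n T p (doublingAlg T F p) := by
  set A := doublingAlg T F p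
  have hprofit := sum_ite_add_succ_le (m := T - 1) (x := fun t => p t (A t))
    (c := Completes (T - 1) (pairWeight F p))
    (fun t => Completes.not_succ) fun t ht => hv.2 t (by omega) _
  rw [Nat.sub_add_cancel hT] at hprofit
  have hterm : ∀ t ∈ range (T - 1),
      (if Completes (T - 1) (pairWeight F p) t then pairWeight F p t else 0) ≤
        (if Completes (T - 1) (pairWeight F p) t then p t (A t) + p (t + 1) (A (t + 1))
          else 0) + #(A t ∩ A (t + 1)) := by
    intro t _
    split_ifs with h
    · rw [pairWeight_eq_of_completes h, pairValue]
    · positivity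
  have := sum_le_sum hterm
  rw [sum_add_distrib] at this
  rw [intVal]
  linarith

theorem intVal_le_four_mul_intVal_doublingAlg {S : ℕ → Finset (Fin n)} (hS : IsSol n T F S) :
    intVal n T p S ≤ 4 * intVal n T p (doublingAlg T F p) := by
  match T, hv, hS with
  | 0, _, _ => simp [intVal]
  | 1, hv, hS =>
    have hA : doublingAlg 1 F p 0 = argmaxOn (F 0) (p 0) := by simp [doublingAlg, Starts]
    have := le_argmaxOn (f := p 0) (hS 0 one_pos)
    simp only [intVal, range_one, sum_singleton, Nat.sub_self, range_zero, sum_empty, add_zero,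
      hA]
    linarith [hv.2 0 one_pos (argmaxOn (F 0) (p 0))]
  | T + 2, hv, hS =>
    calc intVal n (T + 2) p S
        ≤ ∑ t ∈ range (T + 2 - 1), pairWeight F p t :=
          intVal_le_sum_pairWeight hv hS (by omega)
      _ ≤ 4 * ∑ t ∈ range (T + 2 - 1),
            (if Completes (T + 2 - 1) (pairWeight F p) t then pairWeight F p t else 0) :=
        sum_le_four_mul_sum_completes fun t ht => pairWeight_nonneg hv (by omega)
      _ ≤ 4 * intVal n (T + 2) p (doublingAlg (T + 2) F p) := by
        linarith [sum_completes_le_intVal_doublingAlg hv (by omega)]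

end Competitive

end Algorithm

/-- In the GE model with intersection bonus and 1-lookahead, for every `n` and `T`
there is a deterministic 1-lookahead algorithm that is 4-competitive: on every
valid general-evolution instance its output is feasible and has value at least
`OPT / 4`. -/
theorem stmt11 (n T : ℕ) :
    ∃ alg : (ℕ → Set (Finset (Fin n))) → (ℕ → Finset (Fin n) → ℝ) → ℕ → Finset (Fin n),
      IsLookahead1 n T alg ∧
      ∀ F p, ValidInstance n T F p →
        (∀ t, t < T → alg F p t ∈ F t) ∧
        ∀ S : ℕ → Finset (Fin n), IsSol n T F S →
          intVal n T p S / 4 ≤ intVal n T p (alg F p) := by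
  refine ⟨doublingAlg T, doublingAlg_isLookahead1, fun F p hv =>
    ⟨fun t => doublingAlg_mem hv.1, fun S hS => ?_⟩⟩
  linarith [intVal_le_four_mul_intVal_doublingAlg hv hS]
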